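/- arXiv:2402.09014 — 3 statements merged into one kernel-verified Lean document; each statement's English description precedes it below -/
import Mathlib

section
/- Let (F_k) be a nonnegative sequence satisfying F_{k+1} ≤ F_k - (1/(2C)) F_k² with C > 0 and F_k > 0 for all k ≤ N. Then F_N ≤ 2C/N. -/
/-! Since `F (k+1) ≤ F k - c (F k)²` with `c = 1/(2C)`, the reciprocals grow by at least `c` per
step: `1/F (k+1) - 1/F k = (F k - F (k+1)) / (F k F (k+1)) ≥ c F k / F (k+1) ≥ c`.
Hence `1/F N ≥ N c`, i.e. `F N ≤ 2C/N`. -/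

theorem inv_add_le_inv_of_le_sub_mul_sq {a b c : ℝ} (ha : 0 < a) (hb : 0 < b) (hc : 0 ≤ c)
    (h : b ≤ a - c * a ^ 2) : a⁻¹ + c ≤ b⁻¹ := by
  have hba : b ≤ a := by nlinarith [sq_nonneg a]
  rw [inv_eq_one_div, inv_eq_one_div, div_add' _ _ _ ha.ne', div_le_div_iff₀ ha hb]
  nlinarith [mul_le_mul_of_nonneg_left hba (mul_nonneg hc ha.le)]

theorem inv_add_mul_le_inv_of_le_sub_mul_sq {F : ℕ → ℝ} {c : ℝ} {N : ℕ} (hc : 0 ≤ c)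
    (hpos : ∀ k ≤ N, 0 < F k) (hrec : ∀ k, F (k + 1) ≤ F k - c * F k ^ 2) :
    ∀ k ≤ N, (F 0)⁻¹ + k * c ≤ (F k)⁻¹ := by
  intro k hk
  induction k with
  | zero => simp
  | succ k ih =>
    have hstep := inv_add_le_inv_of_le_sub_mul_sq (hpos k (by omega)) (hpos (k + 1) hk) hc (hrec k)
    push_cast
    linarith [ih (by omega)]

theorem le_inv_mul_of_le_sub_mul_sq {F : ℕ → ℝ} {c : ℝ} {N : ℕ} (hc : 0 < c) (hN : 0 < N)
    (hpos : ∀ k ≤ N, 0 < F k) (hrec : ∀ k, F (k + 1) ≤ F k - c * F k ^ 2) :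
    F N ≤ (N * c)⁻¹ := by
  have hgrowth := inv_add_mul_le_inv_of_le_sub_mul_sq hc.le hpos hrec N le_rfl
  have hF0 : 0 < (F 0)⁻¹ := inv_pos.mpr (hpos 0 (Nat.zero_le N))
  have hNc : (0 : ℝ) < N * c := by positivity
  exact (le_inv_comm₀ (hpos N le_rfl) hNc).mpr (by linarith)

theorem convex_recursion_rate_general
    (F : ℕ → ℝ) (C : ℝ) (hC : 0 < C)
    (N : ℕ) (hN : 0 < N)
    (hpos : ∀ k ≤ N, 0 < F k)
    (hrec : ∀ k, F (k + 1) ≤ F k - (1 / (2 * C)) * (F k) ^ 2) :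
    F N ≤ 2 * C / N := by
  have hbound := le_inv_mul_of_le_sub_mul_sq (by positivity) hN hpos hrec
  rwa [mul_inv, one_div, inv_inv, mul_comm, ← div_eq_mul_inv] at hbound

/-- The core recursion of the convex convergence proof: if `F` is nonnegative,
positive up to `N`, and satisfies `F (k+1) ≤ F k - (1/(2C)) (F k)²`, then `F N ≤ 2C/N`. -/
theorem convex_recursion_rate
    (F : ℕ → ℝ) (C : ℝ) (hC : 0 < C)
    (hnonneg : ∀ k, 0 ≤ F k)
    (N : ℕ) (hN : 0 < N)
    (hpos : ∀ k ≤ N, 0 < F k)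
    (hrec : ∀ k, F (k + 1) ≤ F k - (1 / (2 * C)) * (F k) ^ 2) :
    F N ≤ 2 * C / N :=
  convex_recursion_rate_general F C hC N hN hpos hrec
end

section
/- Let g ∈ ℝ^d be nonzero and let e be uniformly distributed on the unit Euclidean sphere S^{d-1}. Then E[sign(⟨g, e⟩) e] = ζ g / ‖g‖ for some scalar ζ = E[|e_1|] depending only on d. -/
/-!
Write `m(u) = E[sign⟪u, e⟫ e]`. Since sign⟪O u, O e⟫ = sign⟪u, e⟫ for every isometry `O`, rotation
invariance of the law of `e` makes `m` equivariant: `m (O u) = O (m u)`. The reflection through the line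
`ℝ u` fixes `u`, hence fixes `m(u)`, so `m(u)` lies on that line and equals `(⟪u, m u⟫ / ‖u‖²) u`
with `⟪u, m u⟫ = E|⟪u, e⟫|`. Finally `E|⟪u, e⟫|` depends on `u` only through `‖u‖`, because any two
vectors of equal norm are exchanged by a reflection; comparing with `‖u‖ e₁` gives `‖u‖ E|e₁|`.
-/

open MeasureTheory

open scoped RealInnerProductSpace

variable {E : Type*} [NormedAddCommGroup E] [InnerProductSpace ℝ E]

/-- `sign ⟪u, e⟫`, with the convention `sign 0 = 1`. -/
noncomputable def signInner (u e : E) : ℝ := if 0 ≤ ⟪u, e⟫ then 1 else -1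

theorem signInner_map_map (O : E ≃ₗᵢ[ℝ] E) (u e : E) : signInner (O u) (O e) = signInner u e := by
  simp only [signInner, O.inner_map_map]

theorem signInner_mul_inner (u e : E) : signInner u e * ⟪u, e⟫ = |⟪u, e⟫| := by
  unfold signInner
  split_ifs with h
  · rw [one_mul, abs_of_nonneg h]
  · rw [neg_one_mul, abs_of_neg (not_le.mp h)]

theorem norm_signInner_smul (u e : E) : ‖signInner u e • e‖ = ‖e‖ := by
  unfold signInner
  split_ifs <;> simp

variable [MeasurableSpace E] [BorelSpace E]

theorem measurable_signInner (u : E) : Measurable (signInner u) :=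
  measurable_const.ite
    (isClosed_le continuous_const (continuous_const.inner continuous_id)).measurableSet measurable_const

theorem MeasureTheory.Integrable.signInner_smul {μ : Measure E} (hint : Integrable (fun e => e) μ)
    (u : E) :
    Integrable (fun e => signInner u e • e) μ :=
  hint.mono ((measurable_signInner u).aestronglyMeasurable.smul hint.aestronglyMeasurable)
    (Filter.Eventually.of_forall fun e => (norm_signInner_smul u e).le)

theorem integral_comp_linearIsometryEquiv {F : Type*} [NormedAddCommGroup F] [NormedSpace ℝ F]
    {μ : Measure E} {O : E ≃ₗᵢ[ℝ] E} (hO : μ.map O = μ) (f : E → F) :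
    ∫ e, f (O e) ∂μ = ∫ e, f e ∂μ :=
  MeasurePreserving.integral_comp ⟨O.continuous.measurable, hO⟩
    O.toHomeomorph.measurableEmbedding f

theorem integral_abs_inner_eq_of_norm_eq {μ : Measure E} (hinv : ∀ O : E ≃ₗᵢ[ℝ] E, μ.map O = μ)
    {u v : E} (h : ‖u‖ = ‖v‖) : ∫ e, |⟪u, e⟫| ∂μ = ∫ e, |⟪v, e⟫| ∂μ := by
  set O := (ℝ ∙ (u - v))ᗮ.reflection
  have hOu : O u = v := Submodule.reflection_sub h
  calc ∫ e, |⟪u, e⟫| ∂μ = ∫ e, |⟪O u, O e⟫| ∂μ := by simp only [O.inner_map_map]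
    _ = ∫ e, |⟪v, e⟫| ∂μ := by
      rw [hOu]; exact integral_comp_linearIsometryEquiv (hinv O) fun e => |⟪v, e⟫|

variable [CompleteSpace E]

noncomputable def signMean (μ : Measure E) (u : E) : E := ∫ e, signInner u e • e ∂μ

theorem signMean_map {μ : Measure E} {O : E ≃ₗᵢ[ℝ] E} (hO : μ.map O = μ) (u : E) :
    signMean μ (O u) = O (signMean μ u) :=
  calc signMean μ (O u) = ∫ e, signInner (O u) (O e) • O e ∂μ :=
        (integral_comp_linearIsometryEquiv hO fun e => signInner (O u) e • e).symm
    _ = ∫ e, O (signInner u e • e) ∂μ := by simp only [signInner_map_map, O.map_smul]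
    _ = O (signMean μ u) := O.toLinearIsometry.integral_comp_comm _

theorem signMean_mem_span_singleton {μ : Measure E} (hinv : ∀ O : E ≃ₗᵢ[ℝ] E, μ.map O = μ)
    (u : E) : signMean μ u ∈ ℝ ∙ u := by
  set R := (ℝ ∙ u).reflection
  have hRu : R u = u :=
    Submodule.reflection_mem_subspace_eq_self (Submodule.mem_span_singleton_self u)
  rw [← Submodule.reflection_eq_self_iff, ← signMean_map (hinv R), hRu]

theorem inner_signMean {μ : Measure E} (hint : Integrable (fun e => e) μ) (u : E) :
    ⟪u, signMean μ u⟫ = ∫ e, |⟪u, e⟫| ∂μ := by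
  rw [signMean, ← integral_inner (hint.signInner_smul u)]
  simp only [real_inner_smul_right, signInner_mul_inner]

theorem signMean_eq_smul {μ : Measure E} (hinv : ∀ O : E ≃ₗᵢ[ℝ] E, μ.map O = μ)
    (hint : Integrable (fun e => e) μ) (u : E) :
    signMean μ u = ((∫ e, |⟪u, e⟫| ∂μ) / ‖u‖ ^ 2) • u := by
  rw [← inner_signMean hint]
  calc signMean μ u = (ℝ ∙ u).starProjection (signMean μ u) :=
        (Submodule.starProjection_eq_self_iff.mpr (signMean_mem_span_singleton hinv u)).symm
    _ = _ := Submodule.starProjection_singleton ℝ _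

theorem expectation_sign_inner_smul_eq_general
    {d : ℕ} (hd : 0 < d)
    (μ : Measure (EuclideanSpace ℝ (Fin d))) [IsProbabilityMeasure μ]
    (hsphere : ∀ᵐ e ∂μ, ‖e‖ = 1)
    (hinv : ∀ O : EuclideanSpace ℝ (Fin d) ≃ₗᵢ[ℝ] EuclideanSpace ℝ (Fin d),
      Measure.map O μ = μ)
    (g : EuclideanSpace ℝ (Fin d)) :
    (∫ e, (if (0:ℝ) ≤ (inner ℝ g e : ℝ) then (1:ℝ) else -1) • e ∂μ)
      = (∫ e, |e ⟨0, hd⟩| ∂μ) • (‖g‖⁻¹ • g) := by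
  have hint : Integrable (fun e => e) μ :=
    (integrable_const (1 : ℝ)).mono' aestronglyMeasurable_id (hsphere.mono fun e he => he.le)
  set e₀ := EuclideanSpace.single (⟨0, hd⟩ : Fin d) (1 : ℝ)
  have habs : ∫ e, |⟪g, e⟫| ∂μ = ‖g‖ * ∫ e, |e ⟨0, hd⟩| ∂μ := by
    rw [integral_abs_inner_eq_of_norm_eq hinv (v := ‖g‖ • e₀) (by simp [e₀, norm_smul]),
      ← integral_const_mul]
    simp [e₀, real_inner_smul_left, EuclideanSpace.inner_single_left, abs_mul]
  change signMean μ g = _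
  rw [signMean_eq_smul hinv hint, habs, smul_smul, mul_comm ‖g‖, mul_div_assoc, sq,
    div_self_mul_self']

/-- For `e` uniform on the unit sphere (modeled as a rotation-invariant probability
measure supported on the sphere), `E[sign(⟨g,e⟩) e] = ζ · g/‖g‖` with `ζ = E[|e₁|]`. -/
theorem expectation_sign_inner_smul_eq
    {d : ℕ} (hd : 0 < d)
    (μ : Measure (EuclideanSpace ℝ (Fin d))) [IsProbabilityMeasure μ]
    (hsphere : ∀ᵐ e ∂μ, ‖e‖ = 1)
    (hinv : ∀ O : EuclideanSpace ℝ (Fin d) ≃ₗᵢ[ℝ] EuclideanSpace ℝ (Fin d),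
      Measure.map O μ = μ)
    (g : EuclideanSpace ℝ (Fin d)) (hg : g ≠ 0) :
    (∫ e, (if (0:ℝ) ≤ (inner ℝ g e : ℝ) then (1:ℝ) else -1) • e ∂μ)
      = (∫ e, |e ⟨0, hd⟩| ∂μ) • (‖g‖⁻¹ • g) :=
  expectation_sign_inner_smul_eq_general hd μ hsphere hinv g
end

section
/- Let A_{k+1} = A_k + a_{k+1} and B_{k+1} = B_k + μ a_{k+1} with A_0 = 0, B_0 = 1, μ > 0, and a_{k+1} determined by a_{k+1}² S² = A_{k+1} B_{k+1} for a constant S > 0. Then A_N ≥ (1/(4μ)) [(1+γ)^N - (1-γ)^N]² where γ = √μ/(2S). -/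
/-!
Put `x_k = √(μ A_k)` and `y_k = √(B_k)`. The defining relation says that both increments
`μ A_{k+1} - μ A_k` and `B_{k+1} - B_k` equal `μ a_{k+1} = 2γ x_{k+1} y_{k+1}`, and since
`t - s ≤ 2√t (√t - √s)` this gives the implicit scheme `x_{k+1} ≥ x_k + γ y_{k+1}`,
`y_{k+1} ≥ y_k + γ x_{k+1}`. Both sequences increase, so `(x_k, y_k)` dominates the solution
`((1+γ)^k ∓ (1-γ)^k)/2` of the explicit scheme started at `(0, 1)`, and `A_N = x_N² / μ`.
-/

open Real

lemma sub_le_two_mul_sqrt_mul_sqrt_sub {s t : ℝ} (hs : 0 ≤ s) (ht : 0 ≤ t) :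
    t - s ≤ 2 * √t * (√t - √s) := by
  have key : t - s = 2 * √t * (√t - √s) - (√t - √s) ^ 2 := by
    linear_combination (sq_sqrt hs) - (sq_sqrt ht)
  nlinarith [sq_nonneg (√t - √s)]

lemma le_sqrt_sub_sqrt_of_two_mul_sqrt_mul_le {s t w : ℝ} (hs : 0 ≤ s) (ht : 0 < t)
    (h : 2 * √t * w ≤ t - s) : w ≤ √t - √s := by
  have hsqrt : 0 < 2 * √t := by positivity
  have := h.trans (sub_le_two_mul_sqrt_mul_sqrt_sub hs ht.le)
  exact le_of_mul_le_mul_left this hsqrt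

lemma one_sub_pow_le_one_add_pow {γ : ℝ} (hγ : 0 ≤ γ) (n : ℕ) : (1 - γ) ^ n ≤ (1 + γ) ^ n :=
  calc (1 - γ) ^ n ≤ |1 - γ| ^ n := by rw [← abs_pow]; exact le_abs_self _
    _ ≤ (1 + γ) ^ n := pow_le_pow_left₀ (abs_nonneg _) (abs_le.2 ⟨by linarith, by linarith⟩) n

lemma le_of_implicit_coupled_growth {γ : ℝ} (hγ : 0 ≤ γ) {x y : ℕ → ℝ}
    (hx_nonneg : ∀ k, 0 ≤ x k) (hy_nonneg : ∀ k, 0 ≤ y k) (hy0 : 1 ≤ y 0)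
    (hx : ∀ k, x k + γ * y (k + 1) ≤ x (k + 1)) (hy : ∀ k, y k + γ * x (k + 1) ≤ y (k + 1))
    (k : ℕ) :
    ((1 + γ) ^ k - (1 - γ) ^ k) / 2 ≤ x k ∧ ((1 + γ) ^ k + (1 - γ) ^ k) / 2 ≤ y k := by
  have hx_mono (k : ℕ) : x k ≤ x (k + 1) := by
    linarith [hx k, mul_nonneg hγ (hy_nonneg (k + 1))]
  have hy_mono (k : ℕ) : y k ≤ y (k + 1) := by
    linarith [hy k, mul_nonneg hγ (hx_nonneg (k + 1))]
  have hx_explicit (k : ℕ) : x k + γ * y k ≤ x (k + 1) := by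
    grw [hy_mono k]; exact hx k
  have hy_explicit (k : ℕ) : y k + γ * x k ≤ y (k + 1) := by
    grw [hx_mono k]; exact hy k
  induction k with
  | zero => norm_num [hx_nonneg 0, hy0]
  | succ k ih =>
    obtain ⟨hpx, hqy⟩ := ih
    refine ⟨le_trans ?_ (hx_explicit k), le_trans ?_ (hy_explicit k)⟩
    · calc ((1 + γ) ^ (k + 1) - (1 - γ) ^ (k + 1)) / 2
          = ((1 + γ) ^ k - (1 - γ) ^ k) / 2 + γ * (((1 + γ) ^ k + (1 - γ) ^ k) / 2) := by ring
        _ ≤ x k + γ * y k := by gcongr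
    · calc ((1 + γ) ^ (k + 1) + (1 - γ) ^ (k + 1)) / 2
          = ((1 + γ) ^ k + (1 - γ) ^ k) / 2 + γ * (((1 + γ) ^ k - (1 - γ) ^ k) / 2) := by ring
        _ ≤ y k + γ * x k := by gcongr

lemma mul_eq_two_mul_sqrt_mul_sqrt_of_sq_mul_sq_eq {μ S A B a : ℝ} (hμ : 0 ≤ μ) (hS : 0 < S)
    (hA : 0 ≤ A) (hB : 0 ≤ B) (ha : 0 ≤ a) (h : a ^ 2 * S ^ 2 = A * B) :
    μ * a = 2 * (√μ / (2 * S)) * √(μ * A) * √B := by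
  rw [← sq_eq_sq₀ (by positivity) (by positivity)]
  have hA' : √(μ * A) ^ 2 = μ * A := sq_sqrt (by positivity)
  field_simp
  rw [hA', sq_sqrt hμ, sq_sqrt hB]
  linear_combination μ ^ 2 * h

lemma sqrt_accelerated_step {μ S A A' B B' a : ℝ} (hμ : 0 < μ) (hS : 0 < S) (hA : 0 ≤ A)
    (hB : 0 < B) (ha : 0 < a) (hA' : A' = A + a) (hB' : B' = B + μ * a)
    (h : a ^ 2 * S ^ 2 = A' * B') :
    √(μ * A) + √μ / (2 * S) * √B' ≤ √(μ * A') ∧ √B + √μ / (2 * S) * √(μ * A') ≤ √B' := by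
  subst hA' hB'
  have hincr : μ * a = 2 * (√μ / (2 * S)) * √(μ * (A + a)) * √(B + μ * a) :=
    mul_eq_two_mul_sqrt_mul_sqrt_of_sq_mul_sq_eq hμ.le hS (by positivity) (by positivity) ha.le h
  have hx := le_sqrt_sub_sqrt_of_two_mul_sqrt_mul_le (t := μ * (A + a))
    (w := √μ / (2 * S) * √(B + μ * a)) (mul_nonneg hμ.le hA) (by positivity) (by linarith)
  have hy := le_sqrt_sub_sqrt_of_two_mul_sqrt_mul_le (t := B + μ * a)
    (w := √μ / (2 * S) * √(μ * (A + a))) hB.le (by positivity) (by linarith)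
  constructor <;> linarith

theorem accelerated_parameter_growth_general
    (A B a : ℕ → ℝ) (μ S : ℝ) (hμ : 0 < μ) (hS : 0 < S)
    (hA0 : A 0 = 0) (hB0 : B 0 = 1)
    (ha_pos : ∀ k, 0 < a (k + 1))
    (hA : ∀ k, A (k + 1) = A k + a (k + 1))
    (hB : ∀ k, B (k + 1) = B k + μ * a (k + 1))
    (ha : ∀ k, (a (k + 1)) ^ 2 * S ^ 2 = A (k + 1) * B (k + 1)) :
    ∀ N : ℕ, A N ≥ (1 / (4 * μ)) *
      ((1 + Real.sqrt μ / (2 * S)) ^ N - (1 - Real.sqrt μ / (2 * S)) ^ N) ^ 2 := by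
  intro N
  set γ := √μ / (2 * S)
  have hγ : 0 ≤ γ := by positivity
  have hA_mono : Monotone A := monotone_nat_of_le_succ fun k => by linarith [hA k, ha_pos k]
  have hB_mono : Monotone B :=
    monotone_nat_of_le_succ fun k => by linarith [hB k, mul_pos hμ (ha_pos k)]
  have hA_nonneg (k : ℕ) : 0 ≤ A k := hA0 ▸ hA_mono k.zero_le
  have hB_pos (k : ℕ) : 0 < B k := by linarith [hB0 ▸ hB_mono k.zero_le]
  have hstep (k : ℕ) := sqrt_accelerated_step hμ hS (hA_nonneg k) (hB_pos k) (ha_pos k)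
    (hA k) (hB k) (ha k)
  obtain ⟨hlow, -⟩ := le_of_implicit_coupled_growth hγ (x := fun k => √(μ * A k))
    (y := fun k => √(B k)) (fun _ => sqrt_nonneg _) (fun _ => sqrt_nonneg _) (by simp [hB0])
    (fun k => (hstep k).1) (fun k => (hstep k).2) N
  have hlow_nonneg : 0 ≤ ((1 + γ) ^ N - (1 - γ) ^ N) / 2 := by
    linarith [one_sub_pow_le_one_add_pow hγ N]
  have hsq := (Real.le_sqrt hlow_nonneg (mul_nonneg hμ.le (hA_nonneg N))).1 hlow
  calc (1 / (4 * μ)) * ((1 + γ) ^ N - (1 - γ) ^ N) ^ 2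
      = (((1 + γ) ^ N - (1 - γ) ^ N) / 2) ^ 2 / μ := by field_simp; ring
    _ ≤ A N := by rwa [div_le_iff₀' hμ]

/-- Growth estimate for the parameter sequence of Nesterov's accelerated coordinate
descent: `A_N ≥ (1/(4μ)) [(1+γ)^N - (1-γ)^N]²` with `γ = √μ/(2S)`. -/
theorem accelerated_parameter_growth
    (A B a : ℕ → ℝ) (μ S : ℝ) (hμ : 0 < μ) (hS : 0 < S)
    (hμS : Real.sqrt μ ≤ S)
    (hA0 : A 0 = 0) (hB0 : B 0 = 1)
    (ha_pos : ∀ k, 0 < a (k + 1))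
    (hA : ∀ k, A (k + 1) = A k + a (k + 1))
    (hB : ∀ k, B (k + 1) = B k + μ * a (k + 1))
    (ha : ∀ k, (a (k + 1)) ^ 2 * S ^ 2 = A (k + 1) * B (k + 1)) :
    ∀ N : ℕ, A N ≥ (1 / (4 * μ)) *
      ((1 + Real.sqrt μ / (2 * S)) ^ N - (1 - Real.sqrt μ / (2 * S)) ^ N) ^ 2 :=
  accelerated_parameter_growth_general A B a μ S hμ hS hA0 hB0 ha_pos hA hB ha
end
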